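/- Let E be a Krull-Schmidt exact category with a progenerator P and an injective cogenerator I. Suppose E has only finitely many isomorphism classes of indecomposable objects and that the projective dimension pd_E I of I in E is finite. Then the injective dimension id_E P of P in E is finite. -/

import Mathlib

open CategoryTheory Limits

noncomputable section

namespace PaperWakCat

universe v u

variable {C : Type u} [Category.{v} C] [Abelian C]

instance (priority := 100) : HasFiniteBiproducts C := Abelian.hasFiniteBiproducts

/-- a conflation of the exact subcategory `E`: a short exact sequence of the
ambient abelian category all of whose terms lie in `E`. -/
def Confl (E : Set C) {X Y Z : C} (f : X ⟶ Y) (g : Y ⟶ Z) : Prop :=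
  X ∈ E ∧ Y ∈ E ∧ Z ∈ E ∧ ∃ w : f ≫ g = 0, (ShortComplex.mk f g w).ShortExact

def IsoClosedC (E : Set C) : Prop := ∀ X ∈ E, ∀ Y : C, Nonempty (X ≅ Y) → Y ∈ E

def ExtClosedC (E : Set C) : Prop :=
  ∀ (X Y Z : C) (f : X ⟶ Y) (g : Y ⟶ Z) (w : f ≫ g = 0),
    (ShortComplex.mk f g w).ShortExact → X ∈ E → Z ∈ E → Y ∈ E

def SummandClosedC (E : Set C) : Prop :=
  ∀ X Y : C, (X ⊞ Y) ∈ E → X ∈ E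

def memAddC (P M : C) : Prop :=
  ∃ (n : ℕ) (ι : M ⟶ ⨁ (fun _ : Fin n => P)) (π : (⨁ fun _ : Fin n => P) ⟶ M),
    ι ≫ π = 𝟙 M

/-- `P` is a projective object of the exact category `E`. -/
def ProjC (E : Set C) (P : C) : Prop :=
  P ∈ E ∧ ∀ (X Y Z : C) (f : X ⟶ Y) (g : Y ⟶ Z), Confl E f g →
    ∀ h : P ⟶ Z, ∃ l : P ⟶ Y, l ≫ g = h

/-- `I` is an injective object of the exact category `E`. -/
def InjC (E : Set C) (I : C) : Prop :=
  I ∈ E ∧ ∀ (X Y Z : C) (f : X ⟶ Y) (g : Y ⟶ Z), Confl E f g →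
    ∀ h : X ⟶ I, ∃ l : Y ⟶ I, f ≫ l = h

/-- `P` is a progenerator of the exact category `E`: `E` has enough projectives
and the projective objects of `E` are exactly `add P`. -/
def ProgenC (E : Set C) (P : C) : Prop :=
  (∀ X ∈ E, ∃ (X' Q : C) (f : X' ⟶ Q) (g : Q ⟶ X), Confl E f g ∧ ProjC E Q) ∧
    ∀ M : C, memAddC P M ↔ ProjC E M

/-- `I` is an injective cogenerator of the exact category `E`. -/
def InjCogenC (E : Set C) (I : C) : Prop :=
  (∀ X ∈ E, ∃ (J X' : C) (f : X ⟶ J) (g : J ⟶ X'), Confl E f g ∧ InjC E J) ∧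
    ∀ M : C, memAddC I M ↔ InjC E M

/-- `pd_E M ≤ d`. -/
def pdLEC (E : Set C) (M : C) (d : ℕ) : Prop :=
  ∃ (K P : ℕ → C) (f : ∀ n, K (n + 1) ⟶ P n) (g : ∀ n, P n ⟶ K n),
    K 0 = M ∧ (∀ n, ProjC E (P n)) ∧ (∀ n, Confl E (f n) (g n)) ∧ IsZero (K (d + 1))

/-- `id_E M ≤ d`. -/
def idLEC (E : Set C) (M : C) (d : ℕ) : Prop :=
  ∃ (K I : ℕ → C) (f : ∀ n, K n ⟶ I n) (g : ∀ n, I n ⟶ K (n + 1)),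
    K 0 = M ∧ (∀ n, InjC E (I n)) ∧ (∀ n, Confl E (f n) (g n)) ∧ IsZero (K (d + 1))

/-- `E` is Krull–Schmidt: every object is a finite direct sum of objects
with local endomorphism rings. -/
def KrullSchmidtC (E : Set C) : Prop :=
  ∀ X ∈ E, ∃ (n : ℕ) (Y : Fin n → C),
    (∀ i, IsLocalRing (End (Y i))) ∧ Nonempty (X ≅ ⨁ Y)

def IndecC (X : C) : Prop :=
  ¬ IsZero X ∧ ∀ Y Z : C, Nonempty (X ≅ Y ⊞ Z) → IsZero Y ∨ IsZero Z

def isoSetoidC (C : Type u) [Category.{v} C] : Setoid C :=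
  ⟨fun X Y => Nonempty (X ≅ Y),
    ⟨fun X => ⟨Iso.refl X⟩, fun ⟨e⟩ => ⟨e.symm⟩, fun ⟨e⟩ ⟨f⟩ => ⟨e.trans f⟩⟩⟩

def IsoClassesC (S : Set C) : Type u :=
  Quotient ((isoSetoidC C).comap (Subtype.val : S → C))

/-- `E` is Hom-finite over `R`. -/
def HomFiniteC (R : Type) [CommRing R] (E : Set C) [Linear R C] : Prop :=
  ∀ X Y : C, X ∈ E → Y ∈ E → Module.Finite R (X ⟶ Y)

/-!
An object of `E` of finite projective dimension has projective dimension at most some fixed `N`: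
by Krull–Schmidt it is a finite sum of indecomposables, each of which has finite projective
dimension as a summand, and there are only finitely many indecomposables up to isomorphism.
Injectives lie in `add I`, so they have finite projective dimension, and by two-out-of-three so do
all cosyzygies `K n` of an injective coresolution `K n ↣ J n ↠ K (n + 1)` of `K 0 = P`. Thus
`pd K (N + 1) ≤ N`, and dimension shifting gives
`Ext¹(K (N + 1), K N) ≅ Ext^{N+1}(K (N + 1), P) = 0`. Hence `K N ↣ J N ↠ K (N + 1)` splits,
`K N` is injective and `id P ≤ N`.
-/

open ZeroObject

lemma shortExact_of_forall_lift {X Y Z : C} {f : X ⟶ Y} {g : Y ⟶ Z} (w : f ≫ g = 0) [Mono f]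
    [Epi g] (hlift : ∀ {T : C} (t : T ⟶ Y), t ≫ g = 0 → ∃ u : T ⟶ X, u ≫ f = t) :
    (ShortComplex.mk f g w).ShortExact :=
  { exact := ShortComplex.exact_of_f_is_kernel _ <| KernelFork.IsLimit.ofι' f w
      fun t ht => ⟨(hlift t ht).choose, (hlift t ht).choose_spec⟩
    mono_f := inferInstanceAs (Mono f)
    epi_g := inferInstanceAs (Epi g) }

lemma shortExact_zero_id {Z : C} (X : C) (hZ : IsZero Z) :
    (ShortComplex.mk (0 : Z ⟶ X) (𝟙 X) (by simp)).ShortExact :=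
  ShortComplex.Splitting.shortExact
    { r := 0, s := 𝟙 X, f_r := hZ.eq_of_src _ _, s_g := by simp, id := by simp }

lemma shortExact_id_zero {Z : C} (X : C) (hZ : IsZero Z) :
    (ShortComplex.mk (𝟙 X) (0 : X ⟶ Z) (by simp)).ShortExact :=
  ShortComplex.Splitting.shortExact
    { r := 𝟙 X, s := 0, f_r := by simp, s_g := hZ.eq_of_src _ _, id := by simp }

lemma shortExact_biprod_inl_snd (X Y : C) :
    (ShortComplex.mk (biprod.inl : X ⟶ X ⊞ Y) biprod.snd (by simp)).ShortExact :=
  (ShortComplex.Splitting.ofHasBinaryBiproduct X Y).shortExact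

lemma shortExact_kernel_map_comp {X Y Z : C} (u : X ⟶ Y) (v : Y ⟶ Z) [Epi u] :
    (kernelCokernelCompSequence.snakeInput u v).L₀.ShortExact := by
  let S := kernelCokernelCompSequence.snakeInput u v
  have hδ : S.δ = 0 := (isZero_cokernel_of_epi u).eq_of_tgt _ _
  have : Mono S.L₁.f := inferInstanceAs (Mono (biprod.inl : X ⟶ X ⊞ Y))
  exact { exact := S.L₀_exact
          mono_f := S.mono_L₀_f
          epi_g := S.L₁'_exact.epi_f hδ }

lemma _root_.CategoryTheory.ObjectProperty.prop_biproduct_of_prop_biprod (Q : ObjectProperty C)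
    [Q.IsClosedUnderIsomorphisms] [Q.ContainsZero]
    (hQ : ∀ X Y : C, Q X → Q Y → Q (X ⊞ Y)) {J : Type} [Finite J] (Y : J → C)
    (h : ∀ j, Q (Y j)) : Q (⨁ Y) := by
  have : Q.IsClosedUnderBinaryProducts := .mk' fun _ ⟨F, hF⟩ =>
    Q.prop_of_iso (biprod.isoProd _ _ ≪≫ (HasLimit.isoOfNatIso (diagramIsoPair F)).symm)
      (hQ _ _ (hF _) (hF _))
  have : Q.IsClosedUnderFiniteProducts := .mk'
  exact Q.prop_of_iso (biproduct.isoProduct Y).symm (Q.prop_product h)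

lemma _root_.IsIdempotentElem.eq_zero_or_eq_one_of_isLocalRing {R : Type*} [Ring R]
    [IsLocalRing R] {e : R} (he : IsIdempotentElem e) : e = 0 ∨ e = 1 := by
  rcases IsLocalRing.isUnit_or_isUnit_of_add_one (add_sub_cancel e 1) with h | h
  · exact .inr ((IsIdempotentElem.iff_eq_one_of_isUnit h).1 he)
  · exact .inl (sub_eq_self.1 ((IsIdempotentElem.iff_eq_one_of_isUnit h).1 he.one_sub))

namespace Confl

variable {E : Set C} {X Y Z : C} {f : X ⟶ Y} {g : Y ⟶ Z}

lemma mem_left (h : Confl E f g) : X ∈ E := h.1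

lemma mem_mid (h : Confl E f g) : Y ∈ E := h.2.1

lemma mem_right (h : Confl E f g) : Z ∈ E := h.2.2.1

lemma w (h : Confl E f g) : f ≫ g = 0 := h.2.2.2.choose

lemma shortExact (h : Confl E f g) : (ShortComplex.mk f g h.w).ShortExact :=
  h.2.2.2.choose_spec

lemma mono (h : Confl E f g) : Mono f := h.shortExact.mono_f

lemma epi (h : Confl E f g) : Epi g := h.shortExact.epi_g

lemma exists_lift (h : Confl E f g) {T : C} (t : T ⟶ Y) (ht : t ≫ g = 0) :
    ∃ u : T ⟶ X, u ≫ f = t :=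
  have := h.mono
  h.shortExact.exact.lift' t ht

end Confl

section Conflations

variable {E : Set C}

lemma confl_of_shortExact (hext : ExtClosedC E) {X Y Z : C} {f : X ⟶ Y} {g : Y ⟶ Z}
    {w : f ≫ g = 0} (hS : (ShortComplex.mk f g w).ShortExact) (hX : X ∈ E) (hZ : Z ∈ E) :
    Confl E f g :=
  ⟨hX, hext X Y Z f g w hS hX hZ, hZ, w, hS⟩

omit [Abelian C] in
lemma mem_of_iso (hiso : IsoClosedC E) {X Y : C} (e : X ≅ Y) (hX : X ∈ E) : Y ∈ E :=
  hiso X hX Y ⟨e⟩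

lemma biprod_mem (hext : ExtClosedC E) {X Y : C} (hX : X ∈ E) (hY : Y ∈ E) : (X ⊞ Y) ∈ E :=
  (confl_of_shortExact hext (shortExact_biprod_inl_snd X Y) hX hY).mem_mid

lemma Confl.of_iso (hiso : IsoClosedC E) {X Y Z X' Y' Z' : C} {f : X ⟶ Y} {g : Y ⟶ Z}
    (h : Confl E f g) (eX : X ≅ X') (eY : Y ≅ Y') (eZ : Z ≅ Z') :
    Confl E (eX.inv ≫ f ≫ eY.hom) (eY.inv ≫ g ≫ eZ.hom) := by
  have w : (eX.inv ≫ f ≫ eY.hom) ≫ (eY.inv ≫ g ≫ eZ.hom) = 0 := by simp [reassoc_of% h.w]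
  refine ⟨mem_of_iso hiso eX h.mem_left, mem_of_iso hiso eY h.mem_mid,
    mem_of_iso hiso eZ h.mem_right, w, ?_⟩
  exact ShortComplex.shortExact_of_iso
    (ShortComplex.isoMk (S₁ := .mk f g h.w) (S₂ := .mk _ _ w) eX eY eZ (by simp) (by simp))
    h.shortExact

lemma Confl.comp_iso (hiso : IsoClosedC E) {X Y Z Z' : C} {f : X ⟶ Y} {g : Y ⟶ Z}
    (h : Confl E f g) (e : Z ≅ Z') : Confl E f (g ≫ e.hom) := by
  simpa using h.of_iso hiso (Iso.refl X) (Iso.refl Y) e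

lemma confl_zero_id (hZ : IsZero (Z : C)) (hZE : Z ∈ E) {X : C} (hX : X ∈ E) :
    Confl E (0 : Z ⟶ X) (𝟙 X) :=
  ⟨hZE, hX, hX, _, shortExact_zero_id X hZ⟩

lemma confl_id_zero (hZ : IsZero (Z : C)) (hZE : Z ∈ E) {X : C} (hX : X ∈ E) :
    Confl E (𝟙 X) (0 : X ⟶ Z) :=
  ⟨hX, hX, hZE, _, shortExact_id_zero X hZ⟩

lemma Confl.baseChange (hext : ExtClosedC E) {X Y Z T : C} {f : X ⟶ Y} {g : Y ⟶ Z}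
    (h : Confl E f g) (t : T ⟶ Z) (hT : T ∈ E) :
    Confl E (pullback.lift f 0 (by simp [h.w]) : X ⟶ pullback g t) (pullback.snd g t) := by
  have := h.mono
  have := h.epi
  have : Mono (pullback.lift f 0 (by simp [h.w]) : X ⟶ pullback g t) :=
    mono_of_mono_fac (pullback.lift_fst _ _ _)
  refine confl_of_shortExact hext (shortExact_of_forall_lift (pullback.lift_snd _ _ _)
    fun s hs => ?_) h.mem_left hT
  obtain ⟨u, hu⟩ := h.exists_lift (s ≫ pullback.fst g t)
    (by rw [Category.assoc, pullback.condition, reassoc_of% hs, zero_comp])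
  exact ⟨u, pullback.hom_ext (by rw [Category.assoc, pullback.lift_fst, hu])
    (by rw [Category.assoc, pullback.lift_snd, comp_zero, hs])⟩

lemma Confl.biprod (hext : ExtClosedC E) {X Y Z X' Y' Z' : C}
    {f : X ⟶ Y} {g : Y ⟶ Z} {f' : X' ⟶ Y'} {g' : Y' ⟶ Z'}
    (h : Confl E f g) (h' : Confl E f' g') :
    Confl E (biprod.map f f') (biprod.map g g') := by
  have := h.mono; have := h'.mono; have := h.epi; have := h'.epi
  have w : biprod.map f f' ≫ biprod.map g g' = 0 := by
    ext <;> simp [h.w, h'.w]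
  refine confl_of_shortExact hext (w := w) (shortExact_of_forall_lift w fun t ht => ?_)
    (biprod_mem hext h.mem_left h'.mem_left) (biprod_mem hext h.mem_right h'.mem_right)
  obtain ⟨u, hu⟩ := h.exists_lift (t ≫ biprod.fst) (by simpa using ht =≫ biprod.fst)
  obtain ⟨u', hu'⟩ := h'.exists_lift (t ≫ biprod.snd) (by simpa using ht =≫ biprod.snd)
  exact ⟨biprod.lift u u', by ext <;> simp [hu, hu']⟩

lemma Confl.comp (hiso : IsoClosedC E) (hext : ExtClosedC E) {K₁ K₂ X Y Z : C}
    {i₁ : K₁ ⟶ X} {u : X ⟶ Y} {i₂ : K₂ ⟶ Y} {v : Y ⟶ Z} (h₁ : Confl E i₁ u)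
    (h₂ : Confl E i₂ v) : ∃ (K : C) (i : K ⟶ X) (a : K₁ ⟶ K) (b : K ⟶ K₂),
      Confl E i (u ≫ v) ∧ Confl E a b := by
  have := h₁.mono; have := h₂.mono; have := h₁.epi; have := h₂.epi
  let S := kernelCokernelCompSequence.snakeInput u v
  let e₁ : K₁ ≅ kernel u :=
    IsLimit.conePointUniqueUpToIso h₁.shortExact.fIsKernel (limit.isLimit _)
  let e₂ : K₂ ≅ kernel v :=
    IsLimit.conePointUniqueUpToIso h₂.shortExact.fIsKernel (limit.isLimit _)
  have hL₀ : Confl E S.L₀.f S.L₀.g :=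
    confl_of_shortExact hext (shortExact_kernel_map_comp u v)
      (mem_of_iso hiso e₁ h₁.mem_left) (mem_of_iso hiso e₂ h₂.mem_left)
  have hK : Confl E (kernel.ι (u ≫ v)) (u ≫ v) :=
    confl_of_shortExact hext (w := kernel.condition (u ≫ v))
      { exact := ShortComplex.exact_of_f_is_kernel _ (kernelIsKernel (u ≫ v))
        mono_f := inferInstanceAs (Mono (kernel.ι (u ≫ v)))
        epi_g := inferInstanceAs (Epi (u ≫ v)) }
      hL₀.mem_mid h₂.mem_right
  exact ⟨_, _, _, _, hK, hL₀.of_iso hiso e₁.symm (Iso.refl (kernel (u ≫ v))) e₂.symm⟩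

end Conflations

section Splitting

variable {E : Set C}

def Confl.splittingOfSection {X Y Z : C} {f : X ⟶ Y} {g : Y ⟶ Z} (h : Confl E f g) {s : Z ⟶ Y}
    (hs : s ≫ g = 𝟙 Z) : (ShortComplex.mk f g h.w).Splitting :=
  .ofExactOfSection _ h.shortExact.exact s hs h.mono

lemma exists_iso_biprod_of_retract {X Y : C} (i : Y ⟶ X) (p : X ⟶ Y) (hip : i ≫ p = 𝟙 Y) :
    ∃ K : C, Nonempty (X ≅ Y ⊞ K) :=
  have hS : (ShortComplex.mk (kernel.ι p) p (kernel.condition p)).Exact :=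
    ShortComplex.exact_of_f_is_kernel _ (kernelIsKernel p)
  ⟨kernel p, ⟨(ShortComplex.Splitting.ofExactOfSection _ hS i hip
    (inferInstanceAs (Mono (kernel.ι p)))).isoBinaryBiproduct ≪≫ biprod.braiding _ _⟩⟩

lemma mem_of_iso_biprod_left (hiso : IsoClosedC E) (hsum : SummandClosedC E) {X Y K : C}
    (e : X ≅ Y ⊞ K) (hX : X ∈ E) : Y ∈ E :=
  hsum Y K (mem_of_iso hiso e hX)

lemma mem_of_iso_biprod_right (hiso : IsoClosedC E) (hsum : SummandClosedC E) {X Y K : C}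
    (e : X ≅ Y ⊞ K) (hX : X ∈ E) : K ∈ E :=
  mem_of_iso_biprod_left hiso hsum (e ≪≫ biprod.braiding Y K) hX

end Splitting

lemma memAddC_self (P : C) : memAddC P P :=
  ⟨1, biproduct.lift fun _ => 𝟙 P, biproduct.π _ 0, by simp⟩

lemma memAddC_of_isZero {P M : C} (h : IsZero M) : memAddC P M :=
  ⟨0, 0, 0, h.eq_of_src _ _⟩

lemma memAddC.of_retract {P M M' : C} (h : memAddC P M) (i : M' ⟶ M) (p : M ⟶ M')
    (hip : i ≫ p = 𝟙 M') : memAddC P M' := by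
  obtain ⟨n, ι, π, hιπ⟩ := h
  exact ⟨n, i ≫ ι, π ≫ p, by simp [reassoc_of% hιπ, hip]⟩

section Projectives

variable {E : Set C} {P : C}

lemma ProjC.exists_section {X Y Z : C} {f : X ⟶ Y} {g : Y ⟶ Z} (hZ : ProjC E Z)
    (h : Confl E f g) : ∃ s : Z ⟶ Y, s ≫ g = 𝟙 Z :=
  hZ.2 X Y Z f g h (𝟙 Z)

lemma ProjC.of_iso (hiso : IsoClosedC E) {X Y : C} (h : ProjC E X) (e : X ≅ Y) :
    ProjC E Y := by
  refine ⟨mem_of_iso hiso e h.1, fun A B Z f g hc k => ?_⟩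
  obtain ⟨l, hl⟩ := h.2 A B Z f g hc (e.hom ≫ k)
  exact ⟨e.inv ≫ l, by simp [hl]⟩

lemma ProjC.biprod (hext : ExtClosedC E) {X Y : C} (hX : ProjC E X) (hY : ProjC E Y) :
    ProjC E (X ⊞ Y) := by
  refine ⟨biprod_mem hext hX.1 hY.1, fun A B Z f g hc k => ?_⟩
  obtain ⟨l, hl⟩ := hX.2 A B Z f g hc (biprod.inl ≫ k)
  obtain ⟨l', hl'⟩ := hY.2 A B Z f g hc (biprod.inr ≫ k)
  exact ⟨biprod.desc l l', by ext <;> simp [hl, hl']⟩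

lemma ProgenC.projC_of_memAddC (hP : ProgenC E P) {M : C} (h : memAddC P M) : ProjC E M :=
  (hP.2 M).1 h

lemma ProgenC.projC_of_isZero (hP : ProgenC E P) {M : C} (h : IsZero M) : ProjC E M :=
  hP.projC_of_memAddC (memAddC_of_isZero h)

lemma ProgenC.projC_of_retract (hP : ProgenC E P) {M M' : C} (h : ProjC E M) (i : M' ⟶ M)
    (p : M ⟶ M') (hip : i ≫ p = 𝟙 M') : ProjC E M' :=
  hP.projC_of_memAddC (((hP.2 M).2 h).of_retract i p hip)

lemma ProgenC.zero_mem (hP : ProgenC E P) : (0 : C) ∈ E :=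
  (hP.projC_of_isZero (isZero_zero C)).1

lemma InjCogenC.injC_of_isZero {I : C} (hI : InjCogenC E I) {M : C} (h : IsZero M) :
    InjC E M :=
  (hI.2 M).1 (memAddC_of_isZero h)

lemma InjCogenC.injC_of_retract {I : C} (hI : InjCogenC E I) {M M' : C} (h : InjC E M)
    (i : M' ⟶ M) (p : M ⟶ M') (hip : i ≫ p = 𝟙 M') : InjC E M' :=
  (hI.2 M').1 (((hI.2 M).2 h).of_retract i p hip)

lemma Confl.nonempty_iso_biprod_of_projC {X Y Z : C} {f : X ⟶ Y} {g : Y ⟶ Z}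
    (h : Confl E f g) (hZ : ProjC E Z) : Nonempty (Y ≅ X ⊞ Z) :=
  let ⟨_, hs⟩ := hZ.exists_section h
  ⟨(h.splittingOfSection hs).isoBinaryBiproduct⟩

lemma Confl.nonempty_pullback_iso_biprod (hext : ExtClosedC E) {X Y Z Q : C} {f : X ⟶ Y}
    {g : Y ⟶ Z} (h : Confl E f g) (hQ : ProjC E Q) (t : Q ⟶ Z) :
    Nonempty (pullback g t ≅ X ⊞ Q) :=
  (h.baseChange hext t hQ.1).nonempty_iso_biprod_of_projC hQ

lemma Confl.schanuel (hext : ExtClosedC E) {X K Q K' Q' : C} {f : K ⟶ Q} {g : Q ⟶ X}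
    {f' : K' ⟶ Q'} {g' : Q' ⟶ X} (h : Confl E f g) (h' : Confl E f' g') (hQ : ProjC E Q)
    (hQ' : ProjC E Q') : Nonempty (K ⊞ Q' ≅ K' ⊞ Q) :=
  let ⟨e⟩ := h.nonempty_pullback_iso_biprod hext hQ' g'
  let ⟨e'⟩ := h'.nonempty_pullback_iso_biprod hext hQ g
  ⟨e.symm ≪≫ pullbackSymmetry g g' ≪≫ e'⟩

end Projectives

/-- `pd_E X ≤ d`, unfolded one syzygy at a time. -/
def ProjDimLE (E : Set C) : ℕ → C → Prop
  | 0, X => ProjC E X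
  | d + 1, X =>
    ∃ (K Q : C) (f : K ⟶ Q) (g : Q ⟶ X), Confl E f g ∧ ProjC E Q ∧ ProjDimLE E d K

namespace ProjDimLE

variable {E : Set C} {P : C} {d : ℕ}

lemma mem {X : C} (h : ProjDimLE E d X) : X ∈ E := by
  cases d with
  | zero => exact h.1
  | succ d => obtain ⟨_, _, _, _, hc, _⟩ := h; exact hc.mem_right

lemma of_iso (hiso : IsoClosedC E) {X Y : C} (h : ProjDimLE E d X) (e : X ≅ Y) :
    ProjDimLE E d Y := by
  cases d with
  | zero => exact ProjC.of_iso hiso h e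
  | succ d =>
    obtain ⟨K, Q, f, g, hc, hQ, hK⟩ := h
    exact ⟨K, Q, f, g ≫ e.hom, hc.comp_iso hiso e, hQ, hK⟩

lemma succ (hP : ProgenC E P) {X : C} (h : ProjDimLE E d X) : ProjDimLE E (d + 1) X := by
  induction d generalizing X with
  | zero => exact ⟨0, X, 0, 𝟙 X, confl_zero_id (isZero_zero C) hP.zero_mem h.1,
      h, hP.projC_of_isZero (isZero_zero C)⟩
  | succ d ih =>
    obtain ⟨K, Q, f, g, hc, hQ, hK⟩ := h
    exact ⟨K, Q, f, g, hc, hQ, ih hK⟩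

lemma mono (hP : ProgenC E P) {X : C} {d' : ℕ} (h : ProjDimLE E d X) (hd : d ≤ d') :
    ProjDimLE E d' X := by
  induction hd with
  | refl => exact h
  | step _ ih => exact ih.succ hP

lemma of_projC (hP : ProgenC E P) {X : C} (h : ProjC E X) : ProjDimLE E d X :=
  mono hP (d := 0) h d.zero_le

lemma biprod (hext : ExtClosedC E) {X Y : C} (hX : ProjDimLE E d X) (hY : ProjDimLE E d Y) :
    ProjDimLE E d (X ⊞ Y) := by
  induction d generalizing X Y with
  | zero => exact ProjC.biprod hext hX hY
  | succ d ih =>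
    obtain ⟨K, Q, f, g, hc, hQ, hK⟩ := hX
    obtain ⟨K', Q', f', g', hc', hQ', hK'⟩ := hY
    exact ⟨K ⊞ K', Q ⊞ Q', biprod.map f f', biprod.map g g', hc.biprod hext hc',
      hQ.biprod hext hQ', ih hK hK'⟩

lemma biproduct (hiso : IsoClosedC E) (hext : ExtClosedC E) (hP : ProgenC E P) {n : ℕ}
    (Y : Fin n → C) (h : ∀ i, ProjDimLE E d (Y i)) : ProjDimLE E d (⨁ Y) :=
  let Q : ObjectProperty C := ProjDimLE E d
  have : Q.IsClosedUnderIsomorphisms := ⟨fun e h => of_iso hiso h e⟩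
  have : Q.ContainsZero := ⟨0, isZero_zero C, of_projC hP (hP.projC_of_isZero (isZero_zero C))⟩
  Q.prop_biproduct_of_prop_biprod (fun _ _ => biprod hext) Y h

lemma of_retract (hiso : IsoClosedC E) (hext : ExtClosedC E) (hsum : SummandClosedC E)
    (hP : ProgenC E P) {X Y : C} (h : ProjDimLE E d X) (i : Y ⟶ X) (p : X ⟶ Y)
    (hip : i ≫ p = 𝟙 Y) : ProjDimLE E d Y := by
  induction d generalizing X Y with
  | zero => exact hP.projC_of_retract h i p hip
  | succ d ih =>
    obtain ⟨K, Q, f, g, hc, hQ, hK⟩ := h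
    obtain ⟨Y', ⟨e⟩⟩ := exists_iso_biprod_of_retract i p hip
    obtain ⟨L, R, f₁, g₁, c₁, hR⟩ :=
      hP.1 Y (mem_of_iso_biprod_left hiso hsum e hc.mem_right)
    obtain ⟨L', R', f₂, g₂, c₂, hR'⟩ :=
      hP.1 Y' (mem_of_iso_biprod_right hiso hsum e hc.mem_right)
    obtain ⟨e'⟩ := hc.schanuel hext ((c₁.biprod hext c₂).comp_iso hiso e.symm) hQ
      (hR.biprod hext hR')
    have hL : ProjDimLE E d ((L ⊞ L') ⊞ Q) :=
      ((hK.biprod hext (of_projC hP (hR.biprod hext hR'))).of_iso hiso e')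
    exact ⟨L, R, f₁, g₁, c₁, hR,
      ih hL (biprod.inl ≫ biprod.inl) (biprod.fst ≫ biprod.fst) (by simp)⟩

/-- The horseshoe lemma. -/
lemma mid_of_confl (hiso : IsoClosedC E) (hext : ExtClosedC E) (hP : ProgenC E P)
    {A B Z : C} {f : A ⟶ B} {g : B ⟶ Z} (hc : Confl E f g) (hA : ProjDimLE E d A)
    (hZ : ProjDimLE E d Z) : ProjDimLE E d B := by
  induction d generalizing A B Z with
  | zero =>
    obtain ⟨e⟩ := hc.nonempty_iso_biprod_of_projC hZ
    exact ProjC.of_iso hiso (ProjC.biprod hext hA hZ) e.symm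
  | succ d ih =>
    obtain ⟨KA, QA, iA, pA, cA, hQA, hKA⟩ := hA
    obtain ⟨KZ, QZ, iZ, pZ, cZ, hQZ, hKZ⟩ := hZ
    obtain ⟨e⟩ := hc.nonempty_pullback_iso_biprod hext hQZ pZ
    -- `QA ⊞ QZ ↠ A ⊞ QZ ≅ B ×_Z QZ ↠ B`, with kernels `KA ⊞ 0` and `KZ`
    have c₁ := (cA.biprod hext (confl_zero_id (isZero_zero C) hP.zero_mem hQZ.1)).comp_iso hiso
      (e.symm ≪≫ pullbackSymmetry g pZ)
    obtain ⟨K, i, a, b, hK, hab⟩ := c₁.comp hiso hext (cZ.baseChange hext g hc.mem_mid)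
    have hKA' : ProjDimLE E d (KA ⊞ 0) :=
      hKA.biprod hext (of_projC hP (hP.projC_of_isZero (isZero_zero C)))
    exact ⟨K, QA ⊞ QZ, i, _, hK, hQA.biprod hext hQZ, ih hab hKA' hKZ⟩

lemma left_of_confl (hiso : IsoClosedC E) (hext : ExtClosedC E) (hsum : SummandClosedC E)
    (hP : ProgenC E P) {A B Z : C} {f : A ⟶ B} {g : B ⟶ Z} (hc : Confl E f g)
    (hB : ProjDimLE E d B) (hZ : ProjDimLE E (d + 1) Z) : ProjDimLE E d A := by
  obtain ⟨KZ, QZ, iZ, pZ, cZ, hQZ, hKZ⟩ := hZ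
  obtain ⟨e⟩ := hc.nonempty_pullback_iso_biprod hext hQZ pZ
  have hpb : ProjDimLE E d (pullback pZ g) :=
    mid_of_confl hiso hext hP (cZ.baseChange hext g hB.mem) hKZ hB
  exact (hpb.of_iso hiso (pullbackSymmetry pZ g ≪≫ e)).of_retract hiso hext hsum hP
    biprod.inl biprod.fst (by simp)

lemma right_of_confl (hiso : IsoClosedC E) (hext : ExtClosedC E) (hsum : SummandClosedC E)
    (hP : ProgenC E P) {A B Z : C} {f : A ⟶ B} {g : B ⟶ Z} (hc : Confl E f g)
    (hA : ProjDimLE E d A) (hB : ProjDimLE E d B) : ProjDimLE E (d + 1) Z := by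
  obtain ⟨L, Q, fL, gQ, cL, hQ⟩ := hP.1 Z hc.mem_right
  obtain ⟨e⟩ := hc.nonempty_pullback_iso_biprod hext hQ gQ
  have hpb : ProjDimLE E d (pullback gQ g) :=
    (hA.biprod hext (of_projC hP hQ)).of_iso hiso (e.symm ≪≫ pullbackSymmetry g gQ)
  exact ⟨L, Q, fL, gQ, cL, hQ,
    left_of_confl hiso hext hsum hP (cL.baseChange hext g hB.mem) hpb (hB.succ hP)⟩

lemma of_memAddC (hiso : IsoClosedC E) (hext : ExtClosedC E) (hsum : SummandClosedC E)
    (hP : ProgenC E P) {I M : C} (hI : ProjDimLE E d I) (hM : memAddC I M) :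
    ProjDimLE E d M := by
  obtain ⟨n, ι, π, hιπ⟩ := hM
  exact (biproduct hiso hext hP (fun _ => I) fun _ => hI).of_retract hiso hext hsum hP ι π hιπ

lemma of_pdLEC (hP : ProgenC E P) {X : C} (h : pdLEC E X d) : ProjDimLE E (d + 1) X := by
  obtain ⟨K, Q, f, g, rfl, hQ, hc, hz⟩ := h
  suffices ∀ k m, IsZero (K (m + k)) → ProjDimLE E k (K m) from
    this (d + 1) 0 (by simpa using hz)
  intro k
  induction k with
  | zero => exact fun m hm => of_projC hP (hP.projC_of_isZero hm)
  | succ k ih =>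
    exact fun m hm => ⟨_, _, _, _, hc m, hQ m, ih (m + 1) (by rwa [Nat.add_right_comm])⟩

end ProjDimLE

lemma indecC_of_isLocalRing {X : C} [IsLocalRing (End X)] : IndecC X := by
  refine ⟨fun hX => one_ne_zero (α := End X) (hX.eq_of_src _ _), fun Y Z ⟨e⟩ => ?_⟩
  let ε : End X := e.hom ≫ biprod.fst ≫ biprod.inl ≫ e.inv
  have hε : IsIdempotentElem ε := by simp [ε, IsIdempotentElem, End.mul_def]
  have hY : (biprod.inl ≫ e.inv) ≫ ε ≫ e.hom ≫ biprod.fst = 𝟙 Y := by simp [ε]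
  have hZ : (biprod.inr ≫ e.inv) ≫ ε ≫ e.hom ≫ biprod.snd = 0 := by simp [ε]
  rcases hε.eq_zero_or_eq_one_of_isLocalRing with h | h
  · rw [h] at hY
    exact .inl ((IsZero.iff_id_eq_zero _).2 (by simpa using hY.symm))
  · rw [h] at hZ
    exact .inr ((IsZero.iff_id_eq_zero _).2 (by simpa [End.one_def] using hZ))

section Bound

variable {E : Set C} {P : C}

lemma exists_projDimLE_bound_of_indecC (hiso : IsoClosedC E) (hP : ProgenC E P)
    (hfin : Finite (IsoClassesC {X | X ∈ E ∧ IndecC X})) :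
    ∃ N, ∀ X ∈ E, IndecC X → (∃ d, ProjDimLE E d X) → ProjDimLE E N X := by
  have : ∀ c : IsoClassesC {X | X ∈ E ∧ IndecC X},
      ∃ n, (∃ d, ProjDimLE E d (c.out : C)) → ProjDimLE E n (c.out : C) := fun c => by
    by_cases h : ∃ d, ProjDimLE E d (c.out : C)
    exacts [⟨h.choose, fun _ => h.choose_spec⟩, ⟨0, fun h' => (h h').elim⟩]
  choose b hb using this
  obtain ⟨N, hN⟩ := (Set.finite_range b).bddAbove
  refine ⟨N, fun X hX hind ⟨d, hd⟩ => ?_⟩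
  let c : IsoClassesC {X | X ∈ E ∧ IndecC X} := Quotient.mk _ ⟨X, hX, hind⟩
  obtain ⟨e⟩ : Nonempty ((c.out : C) ≅ X) := Quotient.exact (Quotient.out_eq c)
  exact ((hb c ⟨d, hd.of_iso hiso e.symm⟩).mono hP (hN ⟨c, rfl⟩)).of_iso hiso e

lemma exists_projDimLE_bound (hiso : IsoClosedC E) (hext : ExtClosedC E)
    (hsum : SummandClosedC E) (hP : ProgenC E P) (hKS : KrullSchmidtC E)
    (hfin : Finite (IsoClassesC {X | X ∈ E ∧ IndecC X})) :
    ∃ N, ∀ X ∈ E, (∃ d, ProjDimLE E d X) → ProjDimLE E N X := by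
  obtain ⟨N, hN⟩ := exists_projDimLE_bound_of_indecC hiso hP hfin
  refine ⟨N, fun X hX ⟨d, hd⟩ => ?_⟩
  obtain ⟨n, Y, hY, ⟨e⟩⟩ := hKS X hX
  have hYd : ∀ i, ProjDimLE E d (Y i) := fun i =>
    hd.of_retract hiso hext hsum hP (biproduct.ι Y i ≫ e.inv) (e.hom ≫ biproduct.π Y i)
      (by simp)
  exact (ProjDimLE.biproduct hiso hext hP Y fun i =>
    have := hY i
    hN _ (hYd i).mem indecC_of_isLocalRing ⟨d, hYd i⟩).of_iso hiso e.symm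

end Bound

/-- `Ext¹_E(X, Y) = 0`, phrased as: every conflation `Y ↣ M ↠ X` splits. -/
def ExtOneVanishes (E : Set C) (X Y : C) : Prop :=
  ∀ ⦃M : C⦄ (u : Y ⟶ M) (v : M ⟶ X), Confl E u v → ∃ s : X ⟶ M, s ≫ v = 𝟙 X

section Ext

variable {E : Set C}

lemma ProjC.extOneVanishes {X : C} (hX : ProjC E X) (Y : C) : ExtOneVanishes E X Y :=
  fun _ _ _ h => hX.exists_section h

/-- Dimension shifting: `Ext¹(X, Y) ≅ Ext²(X, Y') ≅ Ext¹(K, Y')`. -/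
lemma extOneVanishes_of_syzygy_of_cosyzygy (hext : ExtClosedC E) {K Q X Y' J Y : C}
    {i : K ⟶ Q} {q : Q ⟶ X} {j : Y' ⟶ J} {b : J ⟶ Y} (hX : Confl E i q) (hQ : ProjC E Q)
    (hY : Confl E j b) (hJ : InjC E J) (h : ExtOneVanishes E K Y') : ExtOneVanishes E X Y := by
  intro M u v hc
  have := hX.epi
  obtain ⟨l, hl⟩ := hQ.2 _ _ _ u v hc q
  obtain ⟨k, hk⟩ := hc.exists_lift (i ≫ l) (by rw [Category.assoc, hl, hX.w])
  -- `k` factors through `b`, because the pullback of `Y' ↣ J ↠ Y` along `k` splits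
  obtain ⟨s, hs⟩ := h _ _ (hY.baseChange hext k hX.mem_left)
  obtain ⟨t, ht⟩ := hJ.2 _ _ _ i q hX (s ≫ pullback.fst b k)
  have htb : i ≫ t ≫ b = k := by
    rw [← Category.assoc, ht, Category.assoc, pullback.condition, reassoc_of% hs]
  have hvan : i ≫ (l - t ≫ b ≫ u) = 0 := by
    rw [Preadditive.comp_sub, reassoc_of% htb, hk, sub_self]
  refine ⟨hX.shortExact.exact.desc _ hvan, ?_⟩
  rw [← cancel_epi q, hX.shortExact.exact.g_desc_assoc, Preadditive.sub_comp, hl,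
    Category.assoc, Category.assoc, hc.w, comp_zero, comp_zero, sub_zero, Category.comp_id]

variable {K J : ℕ → C} {f : ∀ n, K n ⟶ J n} {g : ∀ n, J n ⟶ K (n + 1)}

lemma extOneVanishes_of_coresolution (hext : ExtClosedC E) (hJ : ∀ n, InjC E (J n))
    (hc : ∀ n, Confl E (f n) (g n)) {d : ℕ} {X : C} (hX : ProjDimLE E d X) :
    ExtOneVanishes E X (K d) := by
  induction d generalizing X with
  | zero => exact ProjC.extOneVanishes hX _
  | succ d ih =>
    obtain ⟨L, Q, i, q, hq, hQ, hL⟩ := hX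
    exact extOneVanishes_of_syzygy_of_cosyzygy hext hq hQ (hc d) (hJ d) (ih hL)

lemma exists_projDimLE_cosyzygy (hiso : IsoClosedC E) (hext : ExtClosedC E)
    (hsum : SummandClosedC E) {P : C} (hP : ProgenC E P) {e : ℕ}
    (hJ : ∀ n, ProjDimLE E e (J n)) (hc : ∀ n, Confl E (f n) (g n))
    (h₀ : ∃ d, ProjDimLE E d (K 0)) (n : ℕ) : ∃ d, ProjDimLE E d (K n) := by
  induction n with
  | zero => exact h₀
  | succ n ih =>
    obtain ⟨d, hd⟩ := ih
    exact ⟨max d e + 1, ProjDimLE.right_of_confl hiso hext hsum hP (hc n)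
      (hd.mono hP (le_max_left d e)) ((hJ n).mono hP (le_max_right d e))⟩

end Ext

section InjectiveDimension

variable {E : Set C} {I : C}

lemma InjCogenC.exists_coresolution (hI : InjCogenC E I) {X : C} (hX : X ∈ E) :
    ∃ (K J : ℕ → C) (f : ∀ n, K n ⟶ J n) (g : ∀ n, J n ⟶ K (n + 1)),
      K 0 = X ∧ (∀ n, InjC E (J n)) ∧ ∀ n, Confl E (f n) (g n) := by
  choose J K' f g hc hJ using hI.1
  let K : ℕ → {X // X ∈ E} :=
    fun n => Nat.rec ⟨X, hX⟩ (fun _ Y => ⟨K' Y.1 Y.2, (hc Y.1 Y.2).mem_right⟩) n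
  exact ⟨fun n => (K n).1, fun n => J _ (K n).2, fun n => f _ (K n).2, fun n => g _ (K n).2,
    rfl, fun n => hJ _ _, fun n => hc _ _⟩

lemma InjCogenC.idLEC_zero (hI : InjCogenC E I) {X : C} (hX : InjC E X) : idLEC E X 0 := by
  have h0 : InjC E (0 : C) := hI.injC_of_isZero (isZero_zero C)
  refine ⟨fun | 0 => X | _ + 1 => 0, fun | 0 => X | _ + 1 => 0,
    fun | 0 => 𝟙 X | _ + 1 => 𝟙 0, fun | 0 => 0 | _ + 1 => 0, rfl,
    fun | 0 => hX | _ + 1 => h0, fun | 0 => ?_ | _ + 1 => ?_, isZero_zero C⟩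
  exacts [confl_id_zero (isZero_zero C) h0.1 hX.1, confl_id_zero (isZero_zero C) h0.1 h0.1]

lemma idLEC_succ (hiso : IsoClosedC E) {X J X' : C} {f : X ⟶ J} {g : J ⟶ X'}
    (hc : Confl E f g) (hJ : InjC E J) {n : ℕ} (h : idLEC E X' n) : idLEC E X (n + 1) := by
  obtain ⟨K, I, f', g', hK, hI, hc', hz⟩ := h
  refine ⟨fun | 0 => X | k + 1 => K k, fun | 0 => J | k + 1 => I k,
    fun | 0 => f | k + 1 => f' k, fun | 0 => g ≫ eqToHom hK.symm | k + 1 => g' k, rfl,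
    fun | 0 => hJ | k + 1 => hI k, fun | 0 => ?_ | k + 1 => hc' k, hz⟩
  exact hc.comp_iso hiso (eqToIso hK.symm)

lemma idLEC_of_coresolution (hiso : IsoClosedC E) (hI : InjCogenC E I) {K J : ℕ → C}
    {f : ∀ n, K n ⟶ J n} {g : ∀ n, J n ⟶ K (n + 1)} (hJ : ∀ n, InjC E (J n))
    (hc : ∀ n, Confl E (f n) (g n)) {N : ℕ} (hN : InjC E (K N)) : idLEC E (K 0) N := by
  suffices ∀ k m, InjC E (K (m + k)) → idLEC E (K m) k from this N 0 (by simpa using hN)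
  intro k
  induction k with
  | zero => exact fun m hm => hI.idLEC_zero hm
  | succ k ih =>
    exact fun m hm => idLEC_succ hiso (hc m) (hJ m) (ih (m + 1) (by rwa [Nat.add_right_comm]))

end InjectiveDimension

universe v₁ u₁

/-- Lemma `lem:GSC`.
An exact category is modeled (via the Gabriel–Quillen embedding) as a full
subcategory `E` of an abelian category closed under isomorphisms, extensions and
direct summands, the conflations being the short exact sequences of the ambient
category with all terms in `E`.  If `E` is Krull–Schmidt with a progenerator `P`
and an injective cogenerator `I`, has finitely many indecomposables, and
`pd_E I < ∞`, then `id_E P < ∞`. -/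
theorem statement_15 (C : Type u₁) [Category.{v₁} C] [Abelian C] (E : Set C)
    (hiso : IsoClosedC E) (hext : ExtClosedC E) (hsum : SummandClosedC E)
    (hKS : KrullSchmidtC E)
    (hfin : Finite (IsoClassesC {X | X ∈ E ∧ IndecC X}))
    (P I : C) (hP : ProgenC E P) (hI : InjCogenC E I)
    (hpd : ∃ d, pdLEC E I d) : ∃ d, idLEC E P d := by
  obtain ⟨d₀, hd₀⟩ := hpd
  obtain ⟨N, hN⟩ := exists_projDimLE_bound hiso hext hsum hP hKS hfin
  have hPP : ProjC E P := hP.projC_of_memAddC (memAddC_self P)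
  obtain ⟨K, J, f, g, rfl, hJ, hc⟩ := hI.exists_coresolution hPP.1
  have hJpd (n : ℕ) : ProjDimLE E (d₀ + 1) (J n) :=
    (ProjDimLE.of_pdLEC hP hd₀).of_memAddC hiso hext hsum hP ((hI.2 _).2 (hJ n))
  have hKpd := exists_projDimLE_cosyzygy hiso hext hsum hP hJpd hc
    ⟨0, ProjDimLE.of_projC hP hPP⟩ (N + 1)
  obtain ⟨s, hs⟩ := extOneVanishes_of_coresolution hext hJ hc
    (hN _ (hc N).mem_right hKpd) _ _ (hc N)
  have hKN : InjC E (K N) :=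
    hI.injC_of_retract (hJ N) (f N) _ ((hc N).splittingOfSection hs).f_r
  exact ⟨N, idLEC_of_coresolution hiso hI hJ hc hKN⟩

end PaperWakCat
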